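/- Let f : ℝ² → ℝ² be a homeomorphism admitting a Lyapunov metric function U satisfying the both-signs condition. Then f has no stable and no unstable points; more precisely, for every x ∈ ℝ² and every k > 0 there exists a point y with U(x,y) ≤ k such that U(fⁿ(x),fⁿ(y)) → ∞ as n → +∞, and there exists a point z with U(x,z) ≤ k such that U(fⁿ(x),fⁿ(z)) → ∞ as n → −∞. -/

import Mathlib

/-- First difference of `U` along the dynamics of `f`:
`V(x,y) = U(f(x),f(y)) − U(x,y)`. -/
def Vd (f : Equiv.Perm (ℝ × ℝ)) (U : ℝ × ℝ → ℝ × ℝ → ℝ) (x y : ℝ × ℝ) : ℝ :=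
  U (f x) (f y) - U x y

/-- Second difference of `U` along the dynamics of `f`:
`W(x,y) = U(f²(x),f²(y)) − 2·U(f(x),f(y)) + U(x,y)`. -/
def Wd (f : Equiv.Perm (ℝ × ℝ)) (U : ℝ × ℝ → ℝ × ℝ → ℝ) (x y : ℝ × ℝ) : ℝ :=
  U (f (f x)) (f (f y)) - 2 * U (f x) (f y) + U x y

/-- `U` is a Lyapunov metric function for `f`: a continuous metric on the plane
inducing the same topology as the Euclidean one, whose second difference along
`f` is strictly positive off the diagonal. -/
def IsLyapunovMetric (f : Equiv.Perm (ℝ × ℝ)) (U : ℝ × ℝ → ℝ × ℝ → ℝ) : Prop :=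
  Continuous (fun z : (ℝ × ℝ) × (ℝ × ℝ) => U z.1 z.2) ∧
  (∀ x y, 0 ≤ U x y) ∧ (∀ x y, U x y = U y x) ∧
  (∀ x y, U x y = 0 ↔ x = y) ∧
  (∀ x y z, U x z ≤ U x y + U y z) ∧
  (∀ x : ℝ × ℝ, ∀ ε > (0:ℝ), ∃ δ > (0:ℝ), ∀ y, dist x y < δ → U x y < ε) ∧
  (∀ x : ℝ × ℝ, ∀ ε > (0:ℝ), ∃ δ > (0:ℝ), ∀ y, U x y < δ → dist x y < ε) ∧
  (∀ x y : ℝ × ℝ, x ≠ y → 0 < Wd f U x y)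

/-- `B_k(x)`: the connected component containing `x` of `{w : U(x,w) ≤ k}`. -/
def Bk (U : ℝ × ℝ → ℝ × ℝ → ℝ) (k : ℝ) (x : ℝ × ℝ) : Set (ℝ × ℝ) :=
  connectedComponentIn {w : ℝ × ℝ | U x w ≤ k} x

/-- The both-signs condition: on the boundary of every `B_k(x)` the first
difference takes both a positive and a negative value. -/
def BothSigns (f : Equiv.Perm (ℝ × ℝ)) (U : ℝ × ℝ → ℝ × ℝ → ℝ) : Prop :=
  ∀ x : ℝ × ℝ, ∀ k > (0:ℝ),
    (∃ y ∈ frontier (Bk U k x), 0 < Vd f U x y) ∧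
    (∃ z ∈ frontier (Bk U k x), Vd f U x z < 0)

/-- `x` is a stable point for `(f,U)`. -/
def IsStablePoint (f : Equiv.Perm (ℝ × ℝ)) (U : ℝ × ℝ → ℝ × ℝ → ℝ)
    (x : ℝ × ℝ) : Prop :=
  ∀ k' > (0:ℝ), ∃ k > (0:ℝ), ∀ y ∈ Bk U k x,
    ∀ n : ℤ, 0 ≤ n → U ((f ^ n) x) ((f ^ n) y) < k'

/-- `x` is an unstable point for `(f,U)`. -/
def IsUnstablePoint (f : Equiv.Perm (ℝ × ℝ)) (U : ℝ × ℝ → ℝ × ℝ → ℝ)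
    (x : ℝ × ℝ) : Prop :=
  ∀ k' > (0:ℝ), ∃ k > (0:ℝ), ∀ y ∈ Bk U k x,
    ∀ n : ℤ, n ≤ 0 → U ((f ^ n) x) ((f ^ n) y) < k'

/-!
Along a pair of orbits the distances `aₙ = U(fⁿx, fⁿy)` form a strictly convex sequence in
`n ∈ ℤ`, since `W(fⁿx, fⁿy) = aₙ₊₂ - 2aₙ₊₁ + aₙ > 0`. A convex sequence whose first
increment `a₁ - a₀ = V(x,y)` is positive grows at least linearly as `n → +∞`, and one whose
first increment is negative grows at least linearly as `n → -∞`. The points supplied by the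
both-signs condition lie in the closed set `B_k(x)`, so they are within `U`-distance `k` of `x`.
-/

open Filter

lemma IsClosed.connectedComponentIn {X : Type*} [TopologicalSpace X] {F : Set X}
    (hF : IsClosed F) (x : X) : IsClosed (connectedComponentIn F x) := by
  by_cases hx : x ∈ F
  · rw [connectedComponentIn_eq_image hx]
    exact hF.isClosedEmbedding_subtypeVal.isClosedMap _ isClosed_connectedComponent
  · rw [connectedComponentIn_eq_empty hx]
    exact isClosed_empty

lemma tendsto_atTop_of_monotone_sub {a : ℤ → ℝ} (hd : Monotone fun n => a (n + 1) - a n)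
    (h01 : a 0 < a 1) : Tendsto a atTop atTop := by
  have hlin : ∀ n ≥ (0 : ℤ), a 0 + n * (a 1 - a 0) ≤ a n := by
    refine Int.leInduction (by simp) fun n hn ih => ?_
    have : a 1 - a 0 ≤ a (n + 1) - a n := by simpa using hd hn
    push_cast
    linarith
  have hline : Tendsto (fun n : ℤ => a 0 + n * (a 1 - a 0)) atTop atTop :=
    tendsto_atTop_add_const_left _ _ <|
      tendsto_intCast_atTop_atTop.atTop_mul_const (sub_pos.2 h01)
  exact tendsto_atTop_mono' _ (eventually_ge_atTop 0 |>.mono hlin) hline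

lemma tendsto_atBot_of_monotone_sub {a : ℤ → ℝ} (hd : Monotone fun n => a (n + 1) - a n)
    (h10 : a 1 < a 0) : Tendsto a atBot atTop := by
  have hd' : Monotone fun n => a (-(n + 1)) - a (-n) := fun m n hmn => by
    have := hd (show -(n + 1) ≤ -(m + 1) by omega)
    dsimp only at this
    rw [show -(n + 1) + 1 = -n by ring, show -(m + 1) + 1 = -m by ring] at this
    linarith
  have hback : a 0 < a (-1) := by
    have := hd (show (-1 : ℤ) ≤ 0 by norm_num)
    norm_num at this
    linarith
  have := (tendsto_atTop_of_monotone_sub (a := fun n => a (-n)) hd' (by simpa using hback))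
  simpa [Function.comp_def] using this.comp tendsto_neg_atBot_atTop

lemma Equiv.Perm.zpow_add_one_apply {α : Type*} (f : Equiv.Perm α) (n : ℤ) (x : α) :
    (f ^ (n + 1)) x = f ((f ^ n) x) := by
  rw [add_comm, zpow_one_add, Equiv.Perm.mul_apply]

section Orbit

variable {f : Equiv.Perm (ℝ × ℝ)} {U : ℝ × ℝ → ℝ × ℝ → ℝ}

lemma monotone_orbit_dist_sub (hW : ∀ x y, x ≠ y → 0 < Wd f U x y) {x y : ℝ × ℝ}
    (hxy : x ≠ y) :
    Monotone fun n : ℤ => U ((f ^ (n + 1)) x) ((f ^ (n + 1)) y) - U ((f ^ n) x) ((f ^ n) y) := by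
  refine monotone_int_of_le_succ fun n => ?_
  have := hW _ _ fun h => hxy ((f ^ n).injective h)
  simp only [Wd, ← Equiv.Perm.zpow_add_one_apply] at this
  linarith

lemma tendsto_orbit_dist_atTop (hW : ∀ x y, x ≠ y → 0 < Wd f U x y) {x y : ℝ × ℝ}
    (hxy : x ≠ y) (hV : 0 < Vd f U x y) :
    Tendsto (fun n : ℤ => U ((f ^ n) x) ((f ^ n) y)) atTop atTop :=
  tendsto_atTop_of_monotone_sub (monotone_orbit_dist_sub hW hxy) (by simpa [Vd] using hV)

lemma tendsto_orbit_dist_atBot (hW : ∀ x y, x ≠ y → 0 < Wd f U x y) {x y : ℝ × ℝ}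
    (hxy : x ≠ y) (hV : Vd f U x y < 0) :
    Tendsto (fun n : ℤ => U ((f ^ n) x) ((f ^ n) y)) atBot atTop :=
  tendsto_atBot_of_monotone_sub (monotone_orbit_dist_sub hW hxy) (by simpa [Vd] using hV)

end Orbit

section Lyapunov

variable {f : Equiv.Perm (ℝ × ℝ)} {U : ℝ × ℝ → ℝ × ℝ → ℝ}

lemma frontier_Bk_subset (hU : Continuous fun z : (ℝ × ℝ) × (ℝ × ℝ) => U z.1 z.2) (k : ℝ)
    (x : ℝ × ℝ) : frontier (Bk U k x) ⊆ Bk U k x :=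
  (IsClosed.connectedComponentIn
    (isClosed_le (hU.comp (Continuous.prodMk_right x)) continuous_const) x).frontier_subset

lemma IsLyapunovMetric.ne_of_Vd_ne_zero (hU : IsLyapunovMetric f U) {x y : ℝ × ℝ}
    (hV : Vd f U x y ≠ 0) : x ≠ y := by
  rintro rfl
  simp [Vd, (hU.2.2.2.1 _ _).2] at hV

lemma exists_mem_Bk_tendsto_atTop (hU : IsLyapunovMetric f U) (hBS : BothSigns f U)
    (x : ℝ × ℝ) {k : ℝ} (hk : 0 < k) :
    ∃ y ∈ Bk U k x, Tendsto (fun n : ℤ => U ((f ^ n) x) ((f ^ n) y)) atTop atTop := by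
  obtain ⟨⟨y, hy, hV⟩, -⟩ := hBS x k hk
  exact ⟨y, frontier_Bk_subset hU.1 k x hy,
    tendsto_orbit_dist_atTop hU.2.2.2.2.2.2.2 (hU.ne_of_Vd_ne_zero hV.ne') hV⟩

lemma exists_mem_Bk_tendsto_atBot (hU : IsLyapunovMetric f U) (hBS : BothSigns f U)
    (x : ℝ × ℝ) {k : ℝ} (hk : 0 < k) :
    ∃ z ∈ Bk U k x, Tendsto (fun n : ℤ => U ((f ^ n) x) ((f ^ n) z)) atBot atTop := by
  obtain ⟨-, ⟨z, hz, hV⟩⟩ := hBS x k hk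
  exact ⟨z, frontier_Bk_subset hU.1 k x hz,
    tendsto_orbit_dist_atBot hU.2.2.2.2.2.2.2 (hU.ne_of_Vd_ne_zero hV.ne) hV⟩

lemma not_isStablePoint (hU : IsLyapunovMetric f U) (hBS : BothSigns f U) (x : ℝ × ℝ) :
    ¬ IsStablePoint f U x := fun hs => by
  obtain ⟨k, hk, hbound⟩ := hs 1 one_pos
  obtain ⟨y, hy, hlim⟩ := exists_mem_Bk_tendsto_atTop hU hBS x hk
  obtain ⟨n, hn1, hn0⟩ := ((hlim.eventually_ge_atTop 1).and (eventually_ge_atTop 0)).exists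
  exact (hbound y hy n hn0).not_ge hn1

lemma not_isUnstablePoint (hU : IsLyapunovMetric f U) (hBS : BothSigns f U) (x : ℝ × ℝ) :
    ¬ IsUnstablePoint f U x := fun hs => by
  obtain ⟨k, hk, hbound⟩ := hs 1 one_pos
  obtain ⟨z, hz, hlim⟩ := exists_mem_Bk_tendsto_atBot hU hBS x hk
  obtain ⟨n, hn1, hn0⟩ := ((hlim.eventually_ge_atTop 1).and (eventually_le_atBot 0)).exists
  exact (hbound z hz n hn0).not_ge hn1

end Lyapunov

theorem no_stable_or_unstable_points
    (f : Equiv.Perm (ℝ × ℝ)) (U : ℝ × ℝ → ℝ × ℝ → ℝ)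
    (hU : IsLyapunovMetric f U) (hBS : BothSigns f U) :
    (∀ x : ℝ × ℝ, ¬ IsStablePoint f U x ∧ ¬ IsUnstablePoint f U x) ∧
    ∀ x : ℝ × ℝ, ∀ k > (0:ℝ),
      (∃ y : ℝ × ℝ, U x y ≤ k ∧
        Filter.Tendsto (fun n : ℤ => U ((f ^ n) x) ((f ^ n) y))
          Filter.atTop Filter.atTop) ∧
      (∃ z : ℝ × ℝ, U x z ≤ k ∧
        Filter.Tendsto (fun n : ℤ => U ((f ^ n) x) ((f ^ n) z))
          Filter.atBot Filter.atTop) := by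
  refine ⟨fun x => ⟨not_isStablePoint hU hBS x, not_isUnstablePoint hU hBS x⟩,
    fun x k hk => ⟨?_, ?_⟩⟩
  · obtain ⟨y, hy, hlim⟩ := exists_mem_Bk_tendsto_atTop hU hBS x hk
    exact ⟨y, connectedComponentIn_subset {w | U x w ≤ k} x hy, hlim⟩
  · obtain ⟨z, hz, hlim⟩ := exists_mem_Bk_tendsto_atBot hU hBS x hk
    exact ⟨z, connectedComponentIn_subset {w | U x w ≤ k} x hz, hlim⟩
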